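/- arXiv:2104.05607 — 5 statements merged into one kernel-verified Lean document; each statement's English description precedes it below -/
import Mathlib

section
/- Let Γ be a finite group and let A ⊆ Γ be a symmetric subset containing the identity. If m ≥ 1 is such that |A| > |Γ|/(m+1), then A^{3m} equals the subgroup generated by A. -/
/-!
If `1 ∈ A = A⁻¹` and `g ∈ A ^ (n + 2) \ A ^ (n + 1)`, then the translate `g • A` lies in
`A ^ (n + 3)` and misses `A ^ n` (a common point would put `g` in `A ^ n * A⁻¹ = A ^ (n + 1)`),
so `#(A ^ (n + 3)) ≥ #(A ^ n) + #A`. Once the powers of `A` stop growing they form the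
subgroup `⟨A⟩`. Hence if `A ^ (3 * m) ≠ ⟨A⟩`, every step of three gains `|A|` elements and
`|Γ| ≥ #(A ^ (3 * m + 1)) ≥ (m + 1) * #A`.
-/

open Pointwise

namespace Finset

variable {G : Type*} [Group G] [DecidableEq G] {A : Finset G}

lemma closure_subset_pow_of_pow_succ_subset (hsymm : A⁻¹ = A) (hone : 1 ∈ A) {n : ℕ}
    (hstable : A ^ (n + 1) ⊆ A ^ n) :
    (Subgroup.closure (A : Set G) : Set G) ⊆ (A ^ n : Finset G) := by
  have hmul : ∀ x ∈ A ^ n, ∀ a ∈ A, x * a ∈ A ^ n := fun x hx a ha =>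
    hstable (pow_succ A n ▸ mul_mem_mul hx ha)
  intro g hg
  induction hg using Subgroup.closure_induction_right with
  | one => exact one_mem_pow hone
  | mul_right x _ a ha hx => exact hmul x hx a ha
  | mul_inv_cancel x _ a ha hx =>
    exact hmul x hx a⁻¹ (hsymm ▸ inv_mem_inv (mem_coe.1 ha))

lemma disjoint_smul_pow_of_notMem_pow_succ (hsymm : A⁻¹ = A) {g : G} {n : ℕ}
    (hg : g ∉ A ^ (n + 1)) : Disjoint (g • A) (A ^ n) := by
  refine disjoint_left.2 fun x hxg hxn => hg ?_
  obtain ⟨a, ha, rfl⟩ := mem_smul_finset.1 hxg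
  have hainv : a⁻¹ ∈ A := hsymm ▸ inv_mem_inv ha
  simpa [pow_succ] using mul_mem_mul hxn hainv

lemma card_pow_add_card_le_card_pow_add_three (hsymm : A⁻¹ = A) (hone : 1 ∈ A) {n : ℕ}
    (hgrow : ¬ A ^ (n + 2) ⊆ A ^ (n + 1)) : #(A ^ n) + #A ≤ #(A ^ (n + 3)) := by
  obtain ⟨g, hg, hg'⟩ := not_subset.1 hgrow
  have htranslate : g • A ⊆ A ^ (n + 3) := by
    rw [pow_succ]
    exact smul_finset_subset_smul hg
  have hpow : A ^ n ⊆ A ^ (n + 3) := pow_subset_pow_right hone (by omega)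
  calc #(A ^ n) + #A = #(g • A ∪ A ^ n) := by
        rw [card_union_of_disjoint (disjoint_smul_pow_of_notMem_pow_succ hsymm hg'),
          card_smul_finset, add_comm]
    _ ≤ #(A ^ (n + 3)) := card_le_card (union_subset htranslate hpow)

lemma mul_card_le_card_pow_of_not_closure_subset (hsymm : A⁻¹ = A) (hone : 1 ∈ A) {m : ℕ}
    (hclosure : ¬ (Subgroup.closure (A : Set G) : Set G) ⊆ (A ^ (3 * m) : Finset G)) :
    ∀ j ≤ m, (j + 1) * #A ≤ #(A ^ (3 * j + 1)) := by
  intro j hj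
  induction j with
  | zero => simp
  | succ j ih =>
    have hgrow : ¬ A ^ (3 * j + 1 + 2) ⊆ A ^ (3 * j + 1 + 1) := fun hstable =>
      hclosure <| (closure_subset_pow_of_pow_succ_subset hsymm hone hstable).trans <|
        coe_subset.2 <| pow_subset_pow_right hone (by omega)
    calc (j + 1 + 1) * #A = (j + 1) * #A + #A := by ring
      _ ≤ #(A ^ (3 * j + 1)) + #A := by gcongr; exact ih (by omega)
      _ ≤ #(A ^ (3 * (j + 1) + 1)) := card_pow_add_card_le_card_pow_add_three hsymm hone hgrow

end Finset

theorem finite_group_large_symmetric_set_pow_eq_closure_general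
    {Γ : Type*} [Group Γ] [Fintype Γ] [DecidableEq Γ] (A : Finset Γ)
    (hsymm : A⁻¹ = A) (hone : (1 : Γ) ∈ A) (m : ℕ)
    (hcard : Fintype.card Γ < (m + 1) * A.card) :
    (A : Set Γ) ^ (3 * m) = (Subgroup.closure (A : Set Γ) : Set Γ) := by
  refine (Subgroup.subset_closure.trans Subgroup.closure_pow_le).antisymm ?_
  by_contra hclosure
  rw [← Finset.coe_pow] at hclosure
  have hgrowth := Finset.mul_card_le_card_pow_of_not_closure_subset hsymm hone hclosure m le_rfl
  exact (hcard.trans_le (hgrowth.trans (Finset.card_le_univ _))).false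

/-- Let `Γ` be a finite group and `A ⊆ Γ` a symmetric subset containing the identity.
If `m ≥ 1` and `|A| > |Γ|/(m+1)`, then `A^{3m}` equals the subgroup generated by `A`. -/
theorem finite_group_large_symmetric_set_pow_eq_closure
    {Γ : Type*} [Group Γ] [Fintype Γ] [DecidableEq Γ] (A : Finset Γ)
    (hsymm : A⁻¹ = A) (hone : (1 : Γ) ∈ A) (m : ℕ) (hm : 1 ≤ m)
    (hcard : Fintype.card Γ < (m + 1) * A.card) :
    (A : Set Γ) ^ (3 * m) = (Subgroup.closure (A : Set Γ) : Set Γ) :=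
  finite_group_large_symmetric_set_pow_eq_closure_general A hsymm hone m hcard
end

section
/- Let Γ be an Abelian group, let Q ⊆ Γ be a symmetric subset containing 0. Suppose the progression P₁ = P_{a₁,…,a_m}(K₁,…,K_m) is proper mod Q and the progression P₂ = P_{b₁,…,b_n}(L₁,…,L_n) is proper mod P_{a₁,…,a_m}(2K₁,…,2K_m) + Q. Then the combined progression P_{a₁,…,a_m,b₁,…,b_n}(K₁,…,K_m,L₁,…,L_n) is proper mod Q. -/
open Pointwise

/-- The generalized arithmetic progression `P_{a₁,…,a_m}(K₁,…,K_m)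
  = {ℓ₁a₁ + ⋯ + ℓ_m a_m : |ℓ_i| ≤ K_i}`. -/
def progression {Γ : Type*} [AddCommGroup Γ] {m : ℕ}
    (a : Fin m → Γ) (K : Fin m → ℕ) : Set Γ :=
  {x | ∃ ℓ : Fin m → ℤ, (∀ i, |ℓ i| ≤ (K i : ℤ)) ∧ x = ∑ i, ℓ i • a i}

/-- The progression `P_{a₁,…,a_m}(K₁,…,K_m)` is proper mod `Q` (for `Q` symmetric with `0 ∈ Q`):
whenever two admissible coefficient vectors give values differing by an element of `Q`, the
coefficient vectors coincide. Equivalently, the progression is proper and no two of its distinct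
elements differ by an element of `Q`. -/
def ProperMod {Γ : Type*} [AddCommGroup Γ] {m : ℕ}
    (Q : Set Γ) (a : Fin m → Γ) (K : Fin m → ℕ) : Prop :=
  ∀ ℓ ℓ' : Fin m → ℤ, (∀ i, |ℓ i| ≤ (K i : ℤ)) → (∀ i, |ℓ' i| ≤ (K i : ℤ)) →
    (∑ i, ℓ i • a i) - (∑ i, ℓ' i • a i) ∈ Q → ℓ = ℓ'

/-- If `P_{a}(K)` is proper mod `Q` and `P_{b}(L)` is proper mod `P_{a}(2K) + Q`, then the
combined progression `P_{a,b}(K,L)` is proper mod `Q`. -/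
theorem progression_append_properMod
    {Γ : Type*} [AddCommGroup Γ] {m n : ℕ}
    (Q : Set Γ) (hQsymm : -Q = Q) (hQzero : (0 : Γ) ∈ Q)
    (a : Fin m → Γ) (K : Fin m → ℕ) (b : Fin n → Γ) (L : Fin n → ℕ)
    (h₁ : ProperMod Q a K)
    (h₂ : ProperMod (progression a (fun i => 2 * K i) + Q) b L) :
    ProperMod Q (Fin.append a b) (Fin.append K L) := by
  intro ℓ ℓ' hℓ hℓ' hmem
  set ℓa : Fin m → ℤ := fun i => ℓ (Fin.castAdd n i) with hℓa
  set ℓb : Fin n → ℤ := fun j => ℓ (Fin.natAdd m j) with hℓb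
  set ℓ'a : Fin m → ℤ := fun i => ℓ' (Fin.castAdd n i) with hℓ'a
  set ℓ'b : Fin n → ℤ := fun j => ℓ' (Fin.natAdd m j) with hℓ'b
  have hba : ∀ i, |ℓa i| ≤ (K i : ℤ) := fun i => by
    have := hℓ (Fin.castAdd n i); rwa [Fin.append_left] at this
  have hb'a : ∀ i, |ℓ'a i| ≤ (K i : ℤ) := fun i => by
    have := hℓ' (Fin.castAdd n i); rwa [Fin.append_left] at this
  have hbb : ∀ j, |ℓb j| ≤ (L j : ℤ) := fun j => by
    have := hℓ (Fin.natAdd m j); rwa [Fin.append_right] at this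
  have hb'b : ∀ j, |ℓ'b j| ≤ (L j : ℤ) := fun j => by
    have := hℓ' (Fin.natAdd m j); rwa [Fin.append_right] at this
  have hsum : ∀ c : Fin (m + n) → ℤ,
      ∑ i, c i • Fin.append a b i =
        (∑ i, c (Fin.castAdd n i) • a i) + ∑ j, c (Fin.natAdd m j) • b j := by
    intro c
    rw [Fin.sum_univ_add]
    simp [Fin.append_left, Fin.append_right]
  rw [hsum ℓ, hsum ℓ'] at hmem
  set d : Γ := ((∑ i, ℓa i • a i) + ∑ j, ℓb j • b j) -
      ((∑ i, ℓ'a i • a i) + ∑ j, ℓ'b j • b j) with hd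
  have hprog : (∑ i, ℓ'a i • a i) - (∑ i, ℓa i • a i) ∈
      progression a (fun i => 2 * K i) := by
    refine ⟨fun i => ℓ'a i - ℓa i, fun i => ?_, by
      simp only [sub_smul, Finset.sum_sub_distrib]⟩
    calc |ℓ'a i - ℓa i| ≤ |ℓ'a i| + |ℓa i| := abs_sub _ _
      _ ≤ (K i : ℤ) + (K i : ℤ) := add_le_add (hb'a i) (hba i)
      _ = ((2 * K i : ℕ) : ℤ) := by push_cast; ring
  have hmem2 : (∑ j, ℓb j • b j) - ∑ j, ℓ'b j • b j ∈
      progression a (fun i => 2 * K i) + Q := by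
    rw [Set.mem_add]
    exact ⟨_, hprog, d, hmem, by rw [hd]; abel⟩
  have hbeq : ℓb = ℓ'b := h₂ ℓb ℓ'b hbb hb'b hmem2
  have hbeq' : (∑ j, ℓb j • b j) = ∑ j, ℓ'b j • b j := by rw [hbeq]
  have hmem3 : (∑ i, ℓa i • a i) - ∑ i, ℓ'a i • a i ∈ Q := by
    have : (∑ i, ℓa i • a i) - ∑ i, ℓ'a i • a i = d := by rw [hd, hbeq']; abel
    rwa [this]
  have haeq : ℓa = ℓ'a := h₁ ℓa ℓ'a hba hb'a hmem3
  funext i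
  refine Fin.addCases (fun i => ?_) (fun j => ?_) i
  · exact congrFun haeq i
  · exact congrFun hbeq j
end

section
/- Let G be a connected graph of diameter at least n and let v be a vertex of G. Then for every m ≤ n/2, the ball B(v,n) contains at least (n − 2m)/(4m + 2) pairwise disjoint balls of radius m. -/
/-!
Since the diameter is at least `n`, the triangle inequality gives a vertex `w` with
`d(v, w) ≥ ⌈n/2⌉`. Along a shortest path from `v` to `w`, vertices at mutual distance at least
`2m + 1` have disjoint `m`-balls; spacing them `2m + 1` apart, starting at distance `m` from `v`
and stopping at distance `⌈n/2⌉ ≤ n - m`, keeps their balls inside `B(v, n)` and yields about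
`(n/2 - m)/(2m + 1)` of them.
-/

/-- The graph-distance ball of radius `r` around `x`. -/
def graphBall {V : Type*} (G : SimpleGraph V) (x : V) (r : ℕ) : Set V :=
  {v | G.Reachable x v ∧ G.dist x v ≤ r}

namespace SimpleGraph

variable {V : Type*} {G : SimpleGraph V}

lemma Walk.dist_getVert_add_le {u v : V} (p : G.Walk u v) (i k : ℕ) :
    G.dist (p.getVert i) (p.getVert (i + k)) ≤ k :=
  calc G.dist (p.getVert i) (p.getVert (i + k))
      = G.dist (p.getVert i) ((p.drop i).getVert k) := by rw [Walk.drop_getVert]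
    _ ≤ ((p.drop i).take k).length := dist_le _
    _ ≤ k := by simp

lemma Walk.reachable_getVert {u v : V} (p : G.Walk u v) (i : ℕ) : G.Reachable u (p.getVert i) :=
  (p.take i).reachable

lemma Walk.dist_getVert_getVert_of_length_eq_dist {u v : V} {p : G.Walk u v}
    (hp : p.length = G.dist u v) {i j : ℕ} (hij : i ≤ j) (hj : j ≤ p.length) :
    G.dist (p.getVert i) (p.getVert j) = j - i := by
  obtain ⟨k, rfl⟩ := Nat.exists_eq_add_of_le hij
  obtain ⟨l, hl⟩ := Nat.exists_eq_add_of_le hj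
  have hu := p.dist_getVert_add_le 0 i
  have hv := p.dist_getVert_add_le (i + k) l
  have hk := p.dist_getVert_add_le i k
  rw [zero_add, p.getVert_zero] at hu
  rw [← hl, p.getVert_length] at hv
  have h₁ := (p.reachable_getVert i).dist_triangle_left (p.getVert (i + k))
  have h₂ := (p.reachable_getVert (i + k)).dist_triangle_left v
  omega

lemma Connected.exists_le_two_mul_dist (hG : G.Connected) (x y v : V) :
    ∃ w, G.dist x y ≤ 2 * G.dist v w := by
  have := hG.dist_triangle (u := x) (v := v) (w := y)
  have : G.dist x v = G.dist v x := dist_comm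
  rcases le_total (G.dist v x) (G.dist v y) with h | h
  · exact ⟨y, by omega⟩
  · exact ⟨x, by omega⟩

/-- The witnesses are the vertices at positions `m, 3m + 1, 5m + 2, …` (at most `c`) of `p`. -/
lemma Walk.exists_separated_vertices_of_length_eq_dist {v w : V} {p : G.Walk v w}
    (hp : p.length = G.dist v w) (m c : ℕ) (hc : c ≤ p.length) :
    ∃ Y : Finset V, Y.card = (c + m + 1) / (2 * m + 1) ∧
      (∀ y ∈ Y, G.Reachable v y ∧ G.dist v y ≤ c) ∧
      (Y : Set V).Pairwise fun a b ↦ 2 * m < G.dist a b := by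
  set k := (c + m + 1) / (2 * m + 1)
  set f : ℕ → V := fun i ↦ p.getVert (m + i * (2 * m + 1))
  have hpos : ∀ i < k, m + i * (2 * m + 1) ≤ c := fun i hi ↦ by
    have : (i + 1) * (2 * m + 1) ≤ c + m + 1 := (Nat.le_div_iff_mul_le (by omega)).mp hi
    nlinarith
  have hfar_lt : ∀ i < k, ∀ j < k, i < j → 2 * m < G.dist (f i) (f j) := fun i _ j hj hij ↦ by
    have : i * (2 * m + 1) + (2 * m + 1) ≤ j * (2 * m + 1) := by
      simpa [Nat.succ_mul] using Nat.mul_le_mul_right (2 * m + 1) hij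
    rw [dist_getVert_getVert_of_length_eq_dist hp (by omega) ((hpos j hj).trans hc)]
    omega
  have hfar : (Set.Iio k).Pairwise fun i j ↦ 2 * m < G.dist (f i) (f j) := fun i hi j hj hij ↦ by
    rcases hij.lt_or_gt with h | h
    · exact hfar_lt i hi j hj h
    · rw [dist_comm]; exact hfar_lt j hj i hi h
  have hinj : Set.InjOn f (Set.Iio k) := fun i hi j hj hfij ↦ by
    by_contra hij
    have : 2 * m < G.dist (f i) (f j) := hfar hi hj hij
    rw [hfij, dist_self] at this
    omega
  classical
  refine ⟨(Finset.range k).image f, ?_, ?_, ?_⟩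
  · rw [Finset.card_image_of_injOn (by simpa using hinj), Finset.card_range]
  · simp only [Finset.mem_image, Finset.mem_range]
    rintro _ ⟨i, hi, rfl⟩
    refine ⟨p.reachable_getVert _, ?_⟩
    have hdist := dist_getVert_getVert_of_length_eq_dist hp (Nat.zero_le _) ((hpos i hi).trans hc)
    rw [p.getVert_zero] at hdist
    exact hdist.le.trans (by have := hpos i hi; omega)
  · rw [Finset.coe_image, Finset.coe_range, hinj.pairwise_image]
    exact hfar

end SimpleGraph

section

variable {V : Type*} {G : SimpleGraph V}

lemma graphBall_subset_graphBall {v y : V} {m n : ℕ} (hvy : G.Reachable v y)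
    (h : G.dist v y + m ≤ n) : graphBall G y m ⊆ graphBall G v n := fun u ⟨hyu, hu⟩ ↦
  ⟨hvy.trans hyu, by have := hvy.dist_triangle_left u; omega⟩

lemma disjoint_graphBall_of_lt_dist {a b : V} {m : ℕ} (h : 2 * m < G.dist a b) :
    Disjoint (graphBall G a m) (graphBall G b m) := by
  refine Set.disjoint_left.mpr fun u ⟨hau, ha⟩ ⟨_, hb⟩ ↦ ?_
  have := hau.dist_triangle_left b
  rw [SimpleGraph.dist_comm (u := u)] at this
  omega

end

/-- If `G` is a connected graph of diameter at least `n` and `m ≤ n/2`, then `B(v,n)`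
contains at least `(n − 2m)/(4m + 2)` pairwise disjoint balls of radius `m`. -/
theorem ball_contains_many_disjoint_balls
    {V : Type*} (G : SimpleGraph V) (hconn : G.Connected)
    (n : ℕ) (hdiam : ∃ x y : V, n ≤ G.dist x y)
    (v : V) (m : ℕ) (hm : 2 * m ≤ n) :
    ∃ Y : Finset V, ((n : ℝ) - 2 * m) / (4 * m + 2) ≤ (Y.card : ℝ) ∧
      (∀ y ∈ Y, graphBall G y m ⊆ graphBall G v n) ∧
      (Y : Set V).Pairwise fun a b => Disjoint (graphBall G a m) (graphBall G b m) := by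
  obtain ⟨x, y, hxy⟩ := hdiam
  obtain ⟨w, hw⟩ := hconn.exists_le_two_mul_dist x y v
  obtain ⟨p, hp⟩ := hconn.exists_walk_length_eq_dist v w
  obtain ⟨Y, hcard, hnear, hfar⟩ :=
    p.exists_separated_vertices_of_length_eq_dist hp m ((n + 1) / 2) (by omega)
  have hcount : n ≤ Y.card * (4 * m + 2) + 2 * m := by
    have := Nat.lt_mul_div_succ ((n + 1) / 2 + m + 1) (Nat.succ_pos (2 * m))
    rw [← hcard, Nat.succ_eq_add_one, mul_add_one, mul_comm] at this
    rw [show 4 * m + 2 = 2 * (2 * m + 1) by ring, ← mul_assoc, mul_comm _ 2, mul_assoc]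
    omega
  refine ⟨Y, ?_, fun y hy ↦ graphBall_subset_graphBall (hnear y hy).1 ?_,
    hfar.mono' fun _ _ ↦ disjoint_graphBall_of_lt_dist⟩
  · rw [div_le_iff₀ (by positivity), sub_le_iff_le_add]
    exact_mod_cast hcount
  · have := (hnear y hy).2
    omega
end

section
/- Let G be a finite vertex-transitive graph, v a vertex, and 1 ≤ m₁ ≤ m₂ ≤ diam(G). Then |B(v,m₂)|/|B(v,m₁)| ≥ m₂/(8 m₁). -/
namespace SimpleGraph

variable {V V' ι : Type*} {G : SimpleGraph V} {G' : SimpleGraph V'}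

lemma Hom.dist_map_le (f : G →g G') {u v : V} (h : G.Reachable u v) :
    G'.dist (f u) (f v) ≤ G.dist u v := by
  obtain ⟨p, hp⟩ := h.exists_walk_length_eq_dist
  simpa [hp] using dist_le (p.map f)

lemma Iso.dist_map (φ : G ≃g G') (u v : V) : G'.dist (φ u) (φ v) = G.dist u v := by
  by_cases h : G.Reachable u v
  · refine le_antisymm (φ.toHom.dist_map_le h) ?_
    simpa using φ.symm.toHom.dist_map_le (u := φ u) (v := φ v) (Iso.reachable_iff.2 h)
  · rw [dist_eq_zero_of_not_reachable h, dist_eq_zero_of_not_reachable (mt Iso.reachable_iff.1 h)]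

lemma Iso.preimage_graphBall (φ : G ≃g G') (x : V) (r : ℕ) :
    φ ⁻¹' graphBall G' (φ x) r = graphBall G x r := by
  ext w
  simp [graphBall, Iso.reachable_iff, Iso.dist_map]

lemma Iso.ncard_graphBall (φ : G ≃g G') (x : V) (r : ℕ) :
    (graphBall G' (φ x) r).ncard = (graphBall G x r).ncard := by
  rw [← φ.preimage_graphBall x r, ← Set.ncard_image_of_injective _ φ.injective,
    Set.image_preimage_eq _ φ.surjective]

lemma graphBall_subset_graphBall {x y : V} {r R : ℕ} (hxy : G.Reachable x y)
    (h : G.dist x y + r ≤ R) : graphBall G y r ⊆ graphBall G x R :=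
  fun _ ⟨hyw, hw⟩ => ⟨hxy.trans hyw, (hxy.dist_triangle_left _).trans (by omega)⟩

lemma disjoint_graphBall {x y : V} {r s : ℕ} (h : r + s < G.dist x y) :
    Disjoint (graphBall G x r) (graphBall G y s) := by
  refine Set.disjoint_left.2 fun w ⟨_, hxw⟩ ⟨hyw, hyw'⟩ => ?_
  have := hyw.symm.dist_triangle_right x
  rw [dist_comm (u := w)] at this
  omega

lemma card_mul_le_ncard_graphBall [Finite V] {s : Finset ι} {c : ι → V} {x : V} {r R n : ℕ}
    (hsep : (s : Set ι).Pairwise fun i j => 2 * r < G.dist (c i) (c j))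
    (hreach : ∀ i ∈ s, G.Reachable x (c i)) (hin : ∀ i ∈ s, G.dist x (c i) + r ≤ R)
    (hsize : ∀ i ∈ s, n ≤ (graphBall G (c i) r).ncard) :
    s.card * n ≤ (graphBall G x R).ncard := by
  have hdisj : (s : Set ι).PairwiseDisjoint fun i => graphBall G (c i) r :=
    hsep.mono' fun _ _ h => disjoint_graphBall (by omega)
  calc s.card * n = ∑ i ∈ s, n := by simp
    _ ≤ ∑ i ∈ s, (graphBall G (c i) r).ncard := Finset.sum_le_sum hsize
    _ = (⋃ i ∈ (s : Set ι), graphBall G (c i) r).ncard := by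
      rw [s.finite_toSet.ncard_biUnion (fun _ _ => Set.toFinite _) hdisj, finsum_mem_coe_finset]
    _ ≤ (graphBall G x R).ncard := Set.ncard_le_ncard
      (Set.iUnion₂_subset fun i hi => graphBall_subset_graphBall (hreach i hi) (hin i hi))

namespace Walk

lemma dist_getVert_getVert_of_length_eq_dist_s11 {x y : V} {p : G.Walk x y}
    (hp : p.length = G.dist x y) {s t : ℕ} (hst : s ≤ t) (ht : t ≤ p.length) :
    G.dist (p.getVert s) (p.getVert t) = t - s := by
  have h := length_eq_dist_of_subwalk hp (((p.drop s).isSubwalk_take (t - s)).trans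
    (p.isSubwalk_drop s))
  simp only [take_length, drop_length, drop_getVert, Nat.add_sub_cancel' hst] at h
  omega

lemma succ_mul_le_ncard_graphBall [Finite V] {x y : V} {p : G.Walk x y}
    (hp : p.length = G.dist x y) {r R k n : ℕ} (hkp : (2 * r + 1) * k ≤ p.length)
    (hkR : (2 * r + 1) * k + r ≤ R)
    (hsize : ∀ j ≤ k, n ≤ (graphBall G (p.getVert ((2 * r + 1) * j)) r).ncard) :
    (k + 1) * n ≤ (graphBall G x R).ncard := by
  have hdist {i j : ℕ} (hij : i ≤ j) (hj : j ≤ k) :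
      G.dist (p.getVert ((2 * r + 1) * i)) (p.getVert ((2 * r + 1) * j)) =
        (2 * r + 1) * (j - i) := by
    rw [dist_getVert_getVert_of_length_eq_dist_s11 hp (Nat.mul_le_mul_left _ hij)
      ((Nat.mul_le_mul_left _ hj).trans hkp), Nat.mul_sub]
  have hsep {i j : ℕ} (hij : i < j) (hj : j ≤ k) :
      2 * r < G.dist (p.getVert ((2 * r + 1) * i)) (p.getVert ((2 * r + 1) * j)) := by
    rw [hdist hij.le hj]
    exact Nat.lt_of_lt_of_le (Nat.lt_succ_self _) (Nat.le_mul_of_pos_right _ (by omega))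
  rw [← Finset.card_range (k + 1)]
  refine card_mul_le_ncard_graphBall (c := fun j => p.getVert ((2 * r + 1) * j)) ?_
    (fun j _ => (p.take _).reachable) ?_ fun j hj => hsize j (Finset.mem_range_succ_iff.1 hj)
  · intro i hi j hj hij
    simp only [Finset.coe_range, Set.mem_Iio] at hi hj
    rcases hij.lt_or_gt with h | h
    · exact hsep h (by omega)
    · exact dist_comm (G := G) ▸ hsep h (by omega)
  · intro j hj
    have hj := Finset.mem_range_succ_iff.1 hj
    have hxj := hdist (Nat.zero_le j) hj
    simp only [mul_zero, getVert_zero, Nat.sub_zero] at hxj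
    have := Nat.mul_le_mul_left (2 * r + 1) hj
    omega

end Walk

lemma ncard_graphBall_eq_of_transitive (htrans : ∀ u v : V, ∃ φ : G ≃g G, φ u = v)
    (x y : V) (r : ℕ) : (graphBall G x r).ncard = (graphBall G y r).ncard := by
  obtain ⟨φ, rfl⟩ := htrans y x
  exact φ.ncard_graphBall y r

lemma exists_dist_eq_diam_of_transitive (htrans : ∀ u v : V, ∃ φ : G ≃g G, φ u = v) (x : V) :
    ∃ y, G.dist x y = G.diam := by
  have : Nonempty V := ⟨x⟩
  obtain ⟨a, b, hab⟩ := G.exists_dist_eq_diam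
  obtain ⟨φ, rfl⟩ := htrans a x
  exact ⟨φ b, by rw [φ.dist_map, hab]⟩

end SimpleGraph

open SimpleGraph

/-- In a finite connected vertex-transitive graph, `|B(v,m₂)|/|B(v,m₁)| ≥ m₂/(8m₁)`
whenever `1 ≤ m₁ ≤ m₂ ≤ diam(G)`. -/
theorem vertexTransitive_ball_growth
    {V : Type*} [Fintype V] (G : SimpleGraph V) (hconn : G.Connected)
    (htrans : ∀ u v : V, ∃ φ : G ≃g G, φ u = v)
    (v : V) (m₁ m₂ : ℕ) (h₁ : 1 ≤ m₁) (h₁₂ : m₁ ≤ m₂) (h₂ : m₂ ≤ G.diam) :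
    (m₂ : ℝ) / (8 * m₁) ≤ ((graphBall G v m₂).ncard : ℝ) / ((graphBall G v m₁).ncard : ℝ) := by
  obtain ⟨w, hw⟩ := exists_dist_eq_diam_of_transitive htrans v
  obtain ⟨p, hp⟩ := hconn.exists_walk_length_eq_dist v w
  set k := (m₂ - m₁) / (2 * m₁ + 1)
  have hk : (2 * m₁ + 1) * k ≤ m₂ - m₁ := Nat.mul_div_le _ _
  have hcount : (k + 1) * (graphBall G v m₁).ncard ≤ (graphBall G v m₂).ncard :=
    p.succ_mul_le_ncard_graphBall hp (by omega) (by omega)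
      fun _ _ => (ncard_graphBall_eq_of_transitive htrans _ _ _).ge
  have hm₂ : m₂ ≤ 4 * m₁ * (k + 1) := by
    have hlt : m₂ - m₁ < (2 * m₁ + 1) * (k + 1) := Nat.lt_mul_div_succ _ (by omega)
    have := (Nat.sub_lt_iff_lt_add h₁₂).1 hlt
    nlinarith
  have hB₁ : 0 < (graphBall G v m₁).ncard :=
    (Set.ncard_pos (Set.toFinite _)).2 ⟨v, .rfl, by simp⟩
  rw [div_le_div_iff₀ (by positivity) (by exact_mod_cast hB₁)]
  have key : m₂ * (graphBall G v m₁).ncard ≤ (graphBall G v m₂).ncard * (8 * m₁) :=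
    calc m₂ * (graphBall G v m₁).ncard ≤ 4 * m₁ * ((k + 1) * (graphBall G v m₁).ncard) := by
          rw [← mul_assoc]; exact Nat.mul_le_mul_right _ hm₂
      _ ≤ 4 * m₁ * (graphBall G v m₂).ncard := Nat.mul_le_mul_left _ hcount
      _ ≤ (graphBall G v m₂).ncard * (8 * m₁) := by nlinarith
  exact_mod_cast key
end

section
/- Let n₁, …, n_d be positive integers with n₁ ≤ ⋯ ≤ n_d, let N_i = 2n_i + 1, let |B| = ∏ N_i, and suppose λ ≥ 1, d ≥ 2, |B| ≥ 100e^λ, and 2(n₁ + ⋯ + n_d) ≤ λ|B|/log|B|. Then there exists 1 ≤ k < d such that N₁⋯N_k ≥ λ⁻¹ log|B| and N_{k+1}⋯N_d ≥ λ⁻¹ log|B|. -/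
open Finset

/-- The splitting step for Euclidean boxes: with `N_i = 2n_i + 1`, `|B| = ∏ N_i`, if
`λ ≥ 1`, `d ≥ 2`, `|B| ≥ 100e^λ`, and `diam(B) = 2(n₁+⋯+n_d) ≤ λ|B|/log|B|`, then there is
`1 ≤ k < d` with `N₁⋯N_k ≥ λ⁻¹ log|B|` and `N_{k+1}⋯N_d ≥ λ⁻¹ log|B|`. -/
theorem box_dimension_splitting
    (d : ℕ) (hd : 2 ≤ d) (n : Fin d → ℕ) (hpos : ∀ i, 1 ≤ n i) (hmono : Monotone n)
    (lam : ℝ) (hlam : 1 ≤ lam)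
    (B : ℝ) (hB : B = ∏ i : Fin d, (2 * (n i : ℝ) + 1))
    (hB100 : 100 * Real.exp lam ≤ B)
    (hdiam : 2 * ∑ i : Fin d, (n i : ℝ) ≤ lam * B / Real.log B) :
    ∃ k : ℕ, 1 ≤ k ∧ k < d ∧
      lam⁻¹ * Real.log B ≤
        ∏ i ∈ univ.filter (fun i : Fin d => (i : ℕ) < k), (2 * (n i : ℝ) + 1) ∧
      lam⁻¹ * Real.log B ≤
        ∏ i ∈ univ.filter (fun i : Fin d => k ≤ (i : ℕ)), (2 * (n i : ℝ) + 1) := by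
  have hlampos : (0:ℝ) < lam := by linarith
  have hBpos : (0:ℝ) < B := lt_of_lt_of_le (by positivity) hB100
  set t := Real.log B with htdef
  -- exp 4.5 < 100
  have hexp45 : Real.exp 4.5 < 100 := by
    have h9 : Real.exp 9 < 10000 := by
      have h1 : Real.exp 1 < 2.7182818286 := Real.exp_one_lt_d9
      have h1p : (0:ℝ) ≤ Real.exp 1 := (Real.exp_pos 1).le
      have h4 : Real.exp 1 ^ (9:ℕ) = Real.exp 9 := by rw [Real.exp_one_pow]; norm_num
      calc Real.exp 9 = Real.exp 1 ^ (9:ℕ) := h4.symm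
        _ < 2.7182818286 ^ (9:ℕ) := by
            exact pow_lt_pow_left₀ h1 h1p (by norm_num)
        _ < 10000 := by norm_num
    have hadd : Real.exp 4.5 * Real.exp 4.5 = Real.exp 9 := by
      rw [← Real.exp_add]; norm_num
    nlinarith [Real.exp_pos 4.5]
  -- lower bound on t = log B
  have ht45 : lam + 4.5 ≤ t := by
    rw [htdef, Real.le_log_iff_exp_le hBpos, Real.exp_add]
    nlinarith [Real.exp_pos lam]
  have ht0 : (5.5:ℝ) ≤ t := by linarith
  have htpos : (0:ℝ) < t := by linarith
  have hBt : B = Real.exp t := (Real.exp_log hBpos).symm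
  -- bounds on exp 2
  have he2 : (7.389:ℝ) ≤ Real.exp 2 := by
    have h2 : 2.7182818283 < Real.exp 1 := Real.exp_one_gt_d9
    have h4 : Real.exp 1 * Real.exp 1 = Real.exp 2 := by
      rw [← Real.exp_add]; norm_num
    nlinarith [Real.exp_pos 1]
  -- t ≤ exp (t/3)
  have hexp3 : t ≤ Real.exp (t/3) := by
    have h := Real.add_one_le_exp (t/3 - 2)
    have heq : Real.exp (t/3) = Real.exp 2 * Real.exp (t/3 - 2) := by
      rw [← Real.exp_add]; ring_nf
    nlinarith [Real.exp_pos (t/3 - 2)]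
  -- B ≥ L^3 where L = lam⁻¹ * t
  have hLle_t : lam⁻¹ * t ≤ t := by
    have hinv1 : lam⁻¹ ≤ 1 := by
      have := inv_mul_cancel₀ (ne_of_gt hlampos)
      nlinarith [inv_pos.mpr hlampos]
    nlinarith [inv_pos.mpr hlampos]
  have hLpos : (0:ℝ) < lam⁻¹ * t := by positivity
  have hL1 : (1:ℝ) < lam⁻¹ * t := by
    have h := mul_lt_mul_of_pos_left (show lam < t by linarith) (inv_pos.mpr hlampos)
    rwa [inv_mul_cancel₀ (ne_of_gt hlampos)] at h
  have hcube : (lam⁻¹ * t)^3 ≤ B := by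
    have h1 : t^3 ≤ B := by
      rw [hBt]
      have h2 : t^3 ≤ Real.exp (t/3) ^ 3 := pow_le_pow_left₀ (by linarith) hexp3 3
      have h3 : Real.exp (t/3) ^ 3 = Real.exp t := by
        have : Real.exp (t/3) ^ 3 = Real.exp (t/3) * Real.exp (t/3) * Real.exp (t/3) := by ring
        rw [this, ← Real.exp_add, ← Real.exp_add]
        congr 1; ring
      linarith
    calc (lam⁻¹ * t)^3 ≤ t^3 := pow_le_pow_left₀ hLpos.le hLle_t 3
      _ ≤ B := h1
  -- positivity facts about the factors
  have hNpos : ∀ i : Fin d, (0:ℝ) < 2 * (n i : ℝ) + 1 := fun i => by positivity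
  have hN1 : ∀ i : Fin d, (1:ℝ) ≤ 2 * (n i : ℝ) + 1 := fun i => by
    have : (0:ℝ) ≤ (n i : ℝ) := Nat.cast_nonneg _
    linarith
  set P : ℕ → ℝ := fun k => ∏ i ∈ univ.filter (fun i : Fin d => (i:ℕ) < k),
    (2 * (n i : ℝ) + 1) with hPdef
  set S : ℕ → ℝ := fun k => ∏ i ∈ univ.filter (fun i : Fin d => k ≤ (i:ℕ)),
    (2 * (n i : ℝ) + 1) with hSdef
  have hPpos : ∀ k, 0 < P k := fun k => Finset.prod_pos (fun i _ => hNpos i)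
  have hSpos : ∀ k, 0 < S k := fun k => Finset.prod_pos (fun i _ => hNpos i)
  have hPS : ∀ k : ℕ, P k * S k = B := by
    intro k
    have hfe : univ.filter (fun i : Fin d => k ≤ (i:ℕ))
        = univ.filter (fun i : Fin d => ¬ ((i:ℕ) < k)) := by
      ext i; simp [not_lt]
    rw [hPdef, hSdef]
    simp only
    rw [hfe, Finset.prod_filter_mul_prod_filter_not, hB]
  have hP0 : P 0 = 1 := by simp [hPdef]
  have hPsucc : ∀ j, ∀ hj : j < d, P (j+1) = P j * (2 * (n ⟨j, hj⟩ : ℝ) + 1) := by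
    intro j hj
    have hset : univ.filter (fun i : Fin d => (i:ℕ) < j + 1)
        = insert ⟨j, hj⟩ (univ.filter (fun i : Fin d => (i:ℕ) < j)) := by
      ext i
      simp only [mem_filter, mem_univ, true_and, mem_insert, Fin.ext_iff]
      omega
    rw [hPdef]
    simp only
    rw [hset, Finset.prod_insert (by simp)]
    ring
  have hd1 : d - 1 < d := by omega
  have h0d : (0:ℕ) < d := by omega
  -- sum bound : n_{d-1} + 1 ≤ ∑ n
  have hsumN : n ⟨d-1, hd1⟩ + 1 ≤ ∑ i : Fin d, n i := by
    have hne : (⟨0, h0d⟩ : Fin d) ≠ ⟨d-1, hd1⟩ := by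
      simp only [ne_eq, Fin.ext_iff]
      omega
    have hsub := Finset.sum_le_sum_of_subset
      (Finset.subset_univ ({⟨0, h0d⟩, ⟨d-1, hd1⟩} : Finset (Fin d))) (f := n)
    rw [Finset.sum_pair hne] at hsub
    have h0 := hpos ⟨0, h0d⟩
    omega
  have hsumR : ((n ⟨d-1, hd1⟩ : ℕ) : ℝ) + 1 ≤ ∑ i : Fin d, (n i : ℝ) := by
    exact_mod_cast hsumN
  -- N_max ≤ lam*B/t - 1
  have hNmax_le : 2 * ((n ⟨d-1, hd1⟩ : ℕ) : ℝ) + 1 ≤ lam * B / t - 1 := by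
    linarith
  -- S (d-1) is the single largest factor
  have hSd1 : S (d-1) = 2 * ((n ⟨d-1, hd1⟩ : ℕ) : ℝ) + 1 := by
    have hone : univ.filter (fun i : Fin d => d - 1 ≤ (i:ℕ))
        = {(⟨d-1, hd1⟩ : Fin d)} := by
      ext i
      simp only [mem_filter, mem_univ, true_and, mem_singleton, Fin.ext_iff]
      have := i.isLt
      omega
    rw [hSdef]
    simp only
    rw [hone, Finset.prod_singleton]
  -- the key identity
  have hkey : lam⁻¹ * t * (lam * B / t) = B := by
    field_simp
  -- prefix at d-1 is large
  have hPd1 : lam⁻¹ * t ≤ P (d-1) := by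
    have hprod : P (d-1) * S (d-1) = B := hPS (d-1)
    rw [hSd1] at hprod
    have h1 : lam⁻¹ * t * (2 * ((n ⟨d-1, hd1⟩ : ℕ) : ℝ) + 1)
        ≤ lam⁻¹ * t * (lam * B / t - 1) :=
      mul_le_mul_of_nonneg_left hNmax_le hLpos.le
    have h2 : lam⁻¹ * t * (lam * B / t - 1) = B - lam⁻¹ * t := by
      have : lam⁻¹ * t * (lam * B / t - 1)
          = lam⁻¹ * t * (lam * B / t) - lam⁻¹ * t := by ring
      rw [this, hkey]
    have h3 : lam⁻¹ * t * (2 * ((n ⟨d-1, hd1⟩ : ℕ) : ℝ) + 1)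
        ≤ P (d-1) * (2 * ((n ⟨d-1, hd1⟩ : ℕ) : ℝ) + 1) := by
      rw [hprod]; linarith
    exact le_of_mul_le_mul_right h3 (hNpos _)
  -- choose minimal k
  set K : Set ℕ := {k : ℕ | lam⁻¹ * t ≤ P k} with hKdef
  have hKne : K.Nonempty := ⟨d-1, hPd1⟩
  set k : ℕ := sInf K with hkdef
  have hkmem : lam⁻¹ * t ≤ P k := Nat.sInf_mem hKne
  have hkle : k ≤ d - 1 := Nat.sInf_le hPd1
  have hk1 : 1 ≤ k := by
    rcases Nat.eq_zero_or_pos k with h | h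
    · exfalso
      have := hkmem
      rw [h, hP0] at this
      linarith
    · exact h
  have hkd : k < d := by omega
  have hkprev' : (k-1) ∉ K := Nat.notMem_of_lt_sInf (s := K) (by omega)
  have hkprev : P (k-1) < lam⁻¹ * t := lt_of_not_ge (fun h => hkprev' h)
  have hk1d : k - 1 < d := by omega
  have hPk : P k = P (k-1) * (2 * ((n ⟨k-1, hk1d⟩ : ℕ) : ℝ) + 1) := by
    have h := hPsucc (k-1) hk1d
    have he : k - 1 + 1 = k := by omega
    rwa [he] at h
  have hNkmax : (2 * ((n ⟨k-1, hk1d⟩ : ℕ) : ℝ) + 1)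
      ≤ 2 * ((n ⟨d-1, hd1⟩ : ℕ) : ℝ) + 1 := by
    have hle : (⟨k-1, hk1d⟩ : Fin d) ≤ ⟨d-1, hd1⟩ := by
      simp only [Fin.le_def]
      omega
    have := hmono hle
    have hcast : ((n ⟨k-1, hk1d⟩ : ℕ) : ℝ) ≤ ((n ⟨d-1, hd1⟩ : ℕ) : ℝ) := by
      exact_mod_cast this
    linarith
  have hSNmax : 2 * ((n ⟨d-1, hd1⟩ : ℕ) : ℝ) + 1 ≤ S k := by
    have hmemk : (⟨d-1, hd1⟩ : Fin d) ∈ univ.filter (fun i : Fin d => k ≤ (i:ℕ)) := by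
      simp only [mem_filter, mem_univ, true_and]
      omega
    have hh : 2 * ((n ⟨d-1, hd1⟩ : ℕ) : ℝ) + 1
        ≤ ∏ i ∈ univ.filter (fun i : Fin d => k ≤ (i:ℕ)), (2 * (n i : ℝ) + 1) := by
      rw [← Finset.mul_prod_erase _ _ hmemk]
      have herase : (1:ℝ) ≤ ∏ i ∈ (univ.filter (fun i : Fin d => k ≤ (i:ℕ))).erase
          ⟨d-1, hd1⟩, (2 * (n i : ℝ) + 1) := by
        have h0 : ∏ _i ∈ (univ.filter (fun i : Fin d => k ≤ (i:ℕ))).erase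
            ⟨d-1, hd1⟩, (1:ℝ)
            ≤ ∏ i ∈ (univ.filter (fun i : Fin d => k ≤ (i:ℕ))).erase
            ⟨d-1, hd1⟩, (2 * (n i : ℝ) + 1) :=
          Finset.prod_le_prod (fun i _ => by norm_num) (fun i _ => hN1 i)
        simpa using h0
      exact le_mul_of_one_le_right (hNpos _).le herase
    exact hh
  -- B ≤ L * S k * S k
  have hBle : B ≤ lam⁻¹ * t * S k * S k := by
    have h1 : P (k-1) * (2 * ((n ⟨k-1, hk1d⟩ : ℕ) : ℝ) + 1)
        ≤ lam⁻¹ * t * (2 * ((n ⟨k-1, hk1d⟩ : ℕ) : ℝ) + 1) :=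
      mul_le_mul_of_nonneg_right hkprev.le (hNpos _).le
    have h2 : lam⁻¹ * t * (2 * ((n ⟨k-1, hk1d⟩ : ℕ) : ℝ) + 1)
        ≤ lam⁻¹ * t * S k := by
      apply mul_le_mul_of_nonneg_left _ hLpos.le
      linarith
    have h3 : P k ≤ lam⁻¹ * t * S k := by
      rw [hPk]; linarith
    have h4 : P k * S k ≤ (lam⁻¹ * t * S k) * S k :=
      mul_le_mul_of_nonneg_right h3 (hSpos k).le
    rw [hPS k] at h4
    exact h4
  -- conclude L ≤ S k
  have hSk : lam⁻¹ * t ≤ S k := by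
    have h6 : lam⁻¹ * t * (lam⁻¹ * t)^2 ≤ lam⁻¹ * t * (S k)^2 := by
      calc lam⁻¹ * t * (lam⁻¹ * t)^2 = (lam⁻¹ * t)^3 := by ring
        _ ≤ B := hcube
        _ ≤ lam⁻¹ * t * S k * S k := hBle
        _ = lam⁻¹ * t * (S k)^2 := by ring
    have hsq : (lam⁻¹ * t)^2 ≤ (S k)^2 := le_of_mul_le_mul_left h6 hLpos
    exact le_of_pow_le_pow_left₀ two_ne_zero (hSpos k).le hsq
  refine ⟨k, hk1, hkd, ?_, ?_⟩
  · have h := hkmem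
    rw [hPdef] at h
    simpa using h
  · have h := hSk
    rw [hSdef] at h
    simpa using h
end
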